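/- arXiv:1512.02929 — 3 statements merged into one kernel-verified Lean document; each statement's English description precedes it below -/
import Mathlib

section
/- Let G be a continuous cdf on [0,∞) with continuous density g. Given η ∈ C[0,∞) with η(0)=0, x₀ ∈ ℝ, and ζ ∈ C[0,∞) with ζ(0) = min(x₀,0), there exists a unique pair (κ,x) ∈ C[0,∞)² with κ(0)=0 satisfying: min(x(t),0) = ζ(t) + κ(t) − ∫₀ᵗ g(t−s)κ(s)ds and κ(t) = η(t) − x⁺(t) + x₀⁺ for all t ≥ 0. -/
open MeasureTheory Set Filter Topology Function

namespace CMSaux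

lemma conv_bound {G : ℝ → ℝ} (hG : Continuous G) {T M : ℝ}
    (hM : ∀ a ∈ Icc (0:ℝ) T, |G a| ≤ M) (hM0 : 0 ≤ M)
    {p q : ℝ → ℝ} (hp : ContinuousOn p (Icc 0 T)) (hq : ContinuousOn q (Icc 0 T))
    {n : ℕ} {D : ℝ} (hD : 0 ≤ D)
    (hb : ∀ s ∈ Icc (0:ℝ) T, |p s - q s| ≤ D * (M ^ n * s ^ n / n.factorial))
    {t : ℝ} (ht : t ∈ Icc (0:ℝ) T) :
    |(∫ s in (0:ℝ)..t, G (t - s) * max (p s) 0) - ∫ s in (0:ℝ)..t, G (t - s) * max (q s) 0|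
      ≤ D * (M ^ (n+1) * t ^ (n+1) / (n+1).factorial) := by
  have ht0 : (0:ℝ) ≤ t := ht.1
  have hsub : Icc (0:ℝ) t ⊆ Icc 0 T := Icc_subset_Icc le_rfl ht.2
  have hGc : Continuous fun s => G (t - s) := hG.comp (continuous_const.sub continuous_id)
  have hint : ∀ f : ℝ → ℝ, ContinuousOn f (Icc 0 T) →
      IntervalIntegrable (fun s => G (t - s) * max (f s) 0) volume 0 t := by
    intro f hf
    apply ContinuousOn.intervalIntegrable
    rw [uIcc_of_le ht0]
    exact hGc.continuousOn.mul ((continuous_id.max continuous_const).comp_continuousOn (hf.mono hsub))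
  have i1 := hint p hp
  have i2 := hint q hq
  rw [← intervalIntegral.integral_sub i1 i2]
  have hfac : ((n.factorial : ℝ)) ≠ 0 := by
    exact_mod_cast n.factorial_ne_zero
  calc |∫ s in (0:ℝ)..t, (G (t - s) * max (p s) 0 - G (t - s) * max (q s) 0)|
      ≤ ∫ s in (0:ℝ)..t, |G (t - s) * max (p s) 0 - G (t - s) * max (q s) 0| := by
        simpa [Real.norm_eq_abs] using
          intervalIntegral.norm_integral_le_integral_norm (f := fun s =>
            G (t - s) * max (p s) 0 - G (t - s) * max (q s) 0) (μ := volume) (a := 0) (b := t) ht0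
    _ ≤ ∫ s in (0:ℝ)..t, (M ^ (n+1) * D / n.factorial) * s ^ n := by
        apply intervalIntegral.integral_mono_on ht0 ((i1.sub i2).abs)
        · exact (Continuous.intervalIntegrable (by continuity) 0 t)
        · intro s hs
          have hsT : s ∈ Icc (0:ℝ) T := hsub hs
          have h1 : |G (t - s)| ≤ M := hM _ ⟨by linarith [hs.1, hs.2], by linarith [hs.1, ht.2]⟩
          have h2 : |max (p s) 0 - max (q s) 0| ≤ D * (M ^ n * s ^ n / n.factorial) :=
            le_trans (abs_max_sub_max_le_abs _ _ _) (hb s hsT)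
          calc |G (t - s) * max (p s) 0 - G (t - s) * max (q s) 0|
              = |G (t - s)| * |max (p s) 0 - max (q s) 0| := by
                rw [← mul_sub, abs_mul]
            _ ≤ M * (D * (M ^ n * s ^ n / n.factorial)) := by
                apply mul_le_mul h1 h2 (abs_nonneg _)
                exact hM0
            _ = (M ^ (n+1) * D / n.factorial) * s ^ n := by ring
    _ = (M ^ (n+1) * D / n.factorial) * (t ^ (n+1) / (n+1)) := by
        rw [intervalIntegral.integral_const_mul, integral_pow]
        norm_num
    _ = D * (M ^ (n+1) * t ^ (n+1) / (n+1).factorial) := by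
        rw [Nat.factorial_succ]
        push_cast
        field_simp


lemma volterra_unique {G R x y : ℝ → ℝ} {T : ℝ} (hG : Continuous G)
    (hx : ContinuousOn x (Icc 0 T)) (hy : ContinuousOn y (Icc 0 T))
    (hxe : ∀ t ∈ Icc (0:ℝ) T, x t = R t + ∫ s in (0:ℝ)..t, G (t - s) * max (x s) 0)
    (hye : ∀ t ∈ Icc (0:ℝ) T, y t = R t + ∫ s in (0:ℝ)..t, G (t - s) * max (y s) 0) :
    ∀ t ∈ Icc (0:ℝ) T, x t = y t := by
  rcases lt_or_ge T 0 with hT | hT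
  · intro t ht; exact absurd (ht.1.trans ht.2) hT.not_ge
  obtain ⟨M, hM⟩ := isCompact_Icc.exists_bound_of_continuousOn
    (hG.continuousOn : ContinuousOn G (Icc (0:ℝ) T))
  have hM0 : 0 ≤ M := le_trans (norm_nonneg _) (hM 0 ⟨le_rfl, hT⟩)
  have hM' : ∀ a ∈ Icc (0:ℝ) T, |G a| ≤ M := fun a ha => by
    simpa [Real.norm_eq_abs] using hM a ha
  obtain ⟨C, hC⟩ := isCompact_Icc.exists_bound_of_continuousOn (hx.sub hy)
  have hC0 : 0 ≤ C := le_trans (norm_nonneg _) (hC 0 ⟨le_rfl, hT⟩)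
  have hC' : ∀ s ∈ Icc (0:ℝ) T, |x s - y s| ≤ C := fun s hs => by
    simpa [Real.norm_eq_abs] using hC s hs
  have key : ∀ n : ℕ, ∀ t ∈ Icc (0:ℝ) T,
      |x t - y t| ≤ C * (M ^ n * t ^ n / n.factorial) := by
    intro n
    induction n with
    | zero => intro t ht; simpa using hC' t ht
    | succ n ih =>
      intro t ht
      rw [hxe t ht, hye t ht, add_sub_add_left_eq_sub]
      exact conv_bound hG hM' hM0 hx hy hC0 ih ht
  intro t ht
  have hlim : Tendsto (fun n : ℕ => C * (M ^ n * t ^ n / n.factorial)) atTop (𝓝 0) := by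
    have h0 := (FloorSemiring.tendsto_pow_div_factorial_atTop (K := ℝ) (M * t)).const_mul C
    rw [mul_zero] at h0
    simpa [mul_pow] using h0
  have hle : |x t - y t| ≤ 0 := ge_of_tendsto' hlim fun n => key n t ht
  exact sub_eq_zero.mp (abs_nonpos_iff.mp hle)


lemma volterra_exists {G R : ℝ → ℝ} (hG : Continuous G) (hR : Continuous R)
    {T : ℝ} (hT : 0 ≤ T) :
    ∃ x : ℝ → ℝ, Continuous x ∧
      ∀ t ∈ Icc (0:ℝ) T, x t = R t + ∫ s in (0:ℝ)..t, G (t - s) * max (x s) 0 := by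
  haveI : Nonempty (Icc (0:ℝ) T) := ⟨⟨0, le_rfl, hT⟩⟩
  -- the Picard map
  have hcont : ∀ u : C(Icc (0:ℝ) T, ℝ), Continuous fun t : ℝ =>
      R t + ∫ s in (0:ℝ)..t, G (t - s) * max (u (projIcc 0 T hT s)) 0 := by
    intro u
    apply hR.add
    apply intervalIntegral.continuous_parametric_intervalIntegral_of_continuous
      (f := fun (t : ℝ) (s : ℝ) => G (t - s) * max (u (projIcc 0 T hT s)) 0) _ continuous_id
    exact (hG.comp (continuous_fst.sub continuous_snd)).mul
      ((u.continuous.comp (continuous_projIcc.comp continuous_snd)).max continuous_const)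
  set Φ : C(Icc (0:ℝ) T, ℝ) → C(Icc (0:ℝ) T, ℝ) := fun u =>
    ⟨fun t => R t + ∫ s in (0:ℝ)..(t:ℝ), G ((t:ℝ) - s) * max (u (projIcc 0 T hT s)) 0,
      (hcont u).comp continuous_subtype_val⟩ with hΦ
  have hval : ∀ (u : C(Icc (0:ℝ) T, ℝ)) (t : ℝ) (ht : t ∈ Icc (0:ℝ) T),
      Φ u (projIcc 0 T hT t)
        = R t + ∫ s in (0:ℝ)..t, G (t - s) * max (u (projIcc 0 T hT s)) 0 := by
    intro u t ht
    rw [projIcc_of_mem hT ht]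
    rfl
  obtain ⟨M, hM⟩ := isCompact_Icc.exists_bound_of_continuousOn
    (hG.continuousOn : ContinuousOn G (Icc (0:ℝ) T))
  have hM0 : 0 ≤ M := le_trans (norm_nonneg _) (hM 0 ⟨le_rfl, hT⟩)
  have hM' : ∀ a ∈ Icc (0:ℝ) T, |G a| ≤ M := fun a ha => by
    simpa [Real.norm_eq_abs] using hM a ha
  -- iterate estimate
  have key : ∀ (u v : C(Icc (0:ℝ) T, ℝ)) (n : ℕ), ∀ t ∈ Icc (0:ℝ) T,
      |(Φ^[n] u) (projIcc 0 T hT t) - (Φ^[n] v) (projIcc 0 T hT t)|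
        ≤ dist u v * (M ^ n * t ^ n / n.factorial) := by
    intro u v n
    induction n with
    | zero =>
      intro t ht
      simpa [Real.dist_eq] using ContinuousMap.dist_apply_le_dist (f := u) (g := v)
        (projIcc 0 T hT t)
    | succ n ih =>
      intro t ht
      rw [Function.iterate_succ_apply', Function.iterate_succ_apply',
        hval _ t ht, hval _ t ht, add_sub_add_left_eq_sub]
      exact conv_bound hG hM' hM0
        ((Φ^[n] u).continuous.comp continuous_projIcc).continuousOn
        ((Φ^[n] v).continuous.comp continuous_projIcc).continuousOn
        dist_nonneg ih ht
  have hdist : ∀ (n : ℕ) (u v : C(Icc (0:ℝ) T, ℝ)),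
      dist (Φ^[n] u) (Φ^[n] v) ≤ (M * T) ^ n / n.factorial * dist u v := by
    intro n u v
    have hnn : (0:ℝ) ≤ (M * T) ^ n / n.factorial * dist u v := by positivity
    rw [ContinuousMap.dist_le hnn]
    intro τ
    have h1 := key u v n (τ : ℝ) τ.2
    rw [projIcc_of_mem hT τ.2] at h1
    rw [Real.dist_eq]
    calc |(Φ^[n] u) τ - (Φ^[n] v) τ|
        = |(Φ^[n] u) ⟨(τ:ℝ), τ.2⟩ - (Φ^[n] v) ⟨(τ:ℝ), τ.2⟩| := by congr
      _ ≤ dist u v * (M ^ n * (τ:ℝ) ^ n / n.factorial) := h1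
      _ ≤ dist u v * (M ^ n * T ^ n / n.factorial) := by
          have := pow_le_pow_left₀ τ.2.1 τ.2.2 n
          gcongr
      _ = (M * T) ^ n / n.factorial * dist u v := by rw [mul_pow]; ring
  obtain ⟨n, hn⟩ := (FloorSemiring.tendsto_pow_div_factorial_atTop (K := ℝ)
    (M * T)).eventually_lt_const one_pos |>.exists
  have hK0 : (0:ℝ) ≤ (M * T) ^ n / n.factorial := by positivity
  set K : NNReal := ⟨(M * T) ^ n / n.factorial, hK0⟩ with hK
  have hcontr : ContractingWith K (Φ^[n]) := by
    constructor
    · exact_mod_cast hn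
    · exact LipschitzWith.of_dist_le_mul fun u v => hdist n u v
  set u₀ := ContractingWith.fixedPoint (Φ^[n]) hcontr with hu₀
  have hfix : Function.IsFixedPt Φ u₀ := hcontr.isFixedPt_fixedPoint_iterate
  refine ⟨fun s => u₀ (projIcc 0 T hT s), u₀.continuous.comp continuous_projIcc, ?_⟩
  intro t ht
  conv_lhs => rw [show u₀ = Φ u₀ from hfix.symm]
  exact hval u₀ t ht


lemma volterra_exists_global {G R : ℝ → ℝ} (hG : Continuous G) (hR : Continuous R) :
    ∃ x : ℝ → ℝ, ContinuousOn x (Ici 0) ∧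
      ∀ t, 0 ≤ t → x t = R t + ∫ s in (0:ℝ)..t, G (t - s) * max (x s) 0 := by
  have hex : ∀ T : ℝ, 0 ≤ T → ∃ x : ℝ → ℝ, Continuous x ∧
      ∀ t ∈ Icc (0:ℝ) T, x t = R t + ∫ s in (0:ℝ)..t, G (t - s) * max (x s) 0 :=
    fun T hT => volterra_exists hG hR hT
  choose! sol hsolc hsole using hex
  have hcons : ∀ T₁ T₂ : ℝ, 0 ≤ T₁ → T₁ ≤ T₂ → ∀ t ∈ Icc (0:ℝ) T₁, sol T₁ t = sol T₂ t := by
    intro T₁ T₂ h0 h12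
    exact volterra_unique hG (hsolc T₁ h0).continuousOn
      (hsolc T₂ (h0.trans h12)).continuousOn (hsole T₁ h0)
      (fun t ht => hsole T₂ (h0.trans h12) t (Icc_subset_Icc le_rfl h12 ht))
  refine ⟨fun t => sol (t + 1) t, ?_, ?_⟩
  · intro t₀ ht₀
    have hmem : Ici (0:ℝ) ∩ Iio (t₀ + 1) ∈ 𝓝[Ici (0:ℝ)] t₀ :=
      inter_mem self_mem_nhdsWithin (nhdsWithin_le_nhds (Iio_mem_nhds (lt_add_one t₀)))
    have ht₀' : (0:ℝ) ≤ t₀ + 2 := by linarith [mem_Ici.mp ht₀]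
    refine ContinuousWithinAt.congr_of_eventuallyEq
      ((hsolc (t₀ + 2) ht₀').continuousWithinAt) ?_ ?_
    · filter_upwards [hmem] with s hs
      obtain ⟨hs0, hslt⟩ := hs
      have hs0' : (0:ℝ) ≤ s := hs0
      have hslt' : s < t₀ + 1 := hslt
      exact hcons (s + 1) (t₀ + 2) (by linarith) (by linarith) s ⟨hs0', by linarith⟩
    · exact hcons (t₀ + 1) (t₀ + 2) (by linarith [mem_Ici.mp ht₀]) (by linarith)
        t₀ ⟨mem_Ici.mp ht₀, by linarith⟩
  · intro t ht
    have h1 := hsole (t + 1) (by linarith) t ⟨ht, by linarith⟩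
    show sol (t + 1) t = _
    rw [h1]
    congr 1
    apply intervalIntegral.integral_congr
    intro s hs
    rw [uIcc_of_le ht] at hs
    obtain ⟨hs0, hst⟩ := hs
    show G (t - s) * (max (sol (t + 1) s) 0) = G (t - s) * (max (sol (s + 1) s) 0)
    rw [hcons (s + 1) (t + 1) (by linarith) (by linarith) s ⟨hs0, by linarith⟩]


/-- the forcing function of the Volterra equation associated with the CMS equations -/
noncomputable def Rfun (g η ζ : ℝ → ℝ) (x₀ : ℝ) : ℝ → ℝ := fun t =>
  ζ (max t 0) + η (max t 0) + max x₀ 0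
    - ∫ s in (0:ℝ)..t, g (max (t - s) 0) * (η (max s 0) + max x₀ 0)


end CMSaux

open CMSaux

/-- `(κ, x)` is a solution of the centered many-server (CMS) equations associated with
`(η, x₀, ζ)`, where `g` is the density of the service distribution:
`κ, x` are continuous on `[0,∞)`, `κ(0) = 0`, and for all `t ≥ 0`,
`min(x(t),0) = ζ(t) + κ(t) − ∫₀ᵗ g(t−s)κ(s)ds` and `κ(t) = η(t) − x⁺(t) + x₀⁺`. -/
def CMSsol (g η ζ : ℝ → ℝ) (x₀ : ℝ) (κ x : ℝ → ℝ) : Prop :=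
  ContinuousOn κ (Ici 0) ∧ ContinuousOn x (Ici 0) ∧ κ 0 = 0 ∧
    (∀ t, 0 ≤ t → min (x t) 0 = ζ t + κ t - ∫ s in (0:ℝ)..t, g (t - s) * κ s) ∧
    (∀ t, 0 ≤ t → κ t = η t - max (x t) 0 + max x₀ 0)

/-- Existence and uniqueness of solutions of the CMS equations: if `g` is a continuous
probability density on `[0,∞)`, `η ∈ C[0,∞)` with `η(0) = 0`, `x₀ ∈ ℝ` and `ζ ∈ C[0,∞)`
with `ζ(0) = min(x₀,0)`, then there is a unique pair `(κ,x)` of continuous functions on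
`[0,∞)` with `κ(0)=0` satisfying the CMS equations. -/
theorem cms_exists_unique (g η ζ : ℝ → ℝ) (x₀ : ℝ)
    (hg_cont : ContinuousOn g (Ici 0)) (hg_nonneg : ∀ x ∈ Ici (0:ℝ), 0 ≤ g x)
    (hg_prob : ∫ x in Ioi (0:ℝ), g x = 1)
    (hη : ContinuousOn η (Ici 0)) (hη0 : η 0 = 0)
    (hζ : ContinuousOn ζ (Ici 0)) (hζ0 : ζ 0 = min x₀ 0) :
    (∃ κ x : ℝ → ℝ, CMSsol g η ζ x₀ κ x) ∧
    (∀ κ₁ x₁ κ₂ x₂ : ℝ → ℝ, CMSsol g η ζ x₀ κ₁ x₁ → CMSsol g η ζ x₀ κ₂ x₂ →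
      ∀ t, 0 ≤ t → κ₁ t = κ₂ t ∧ x₁ t = x₂ t) := by
  have hmax : Continuous fun u : ℝ => max u 0 := continuous_id.max continuous_const
  have hmaxmem : ∀ u : ℝ, max u 0 ∈ Ici (0:ℝ) := fun u => le_max_right u 0
  have hG' : Continuous fun u => g (max u 0) := hg_cont.comp_continuous hmax hmaxmem
  have hη' : Continuous fun u => η (max u 0) := hη.comp_continuous hmax hmaxmem
  have hζ' : Continuous fun u => ζ (max u 0) := hζ.comp_continuous hmax hmaxmem
  have hR : Continuous (Rfun g η ζ x₀) := by
    apply ((hζ'.add hη').add continuous_const).sub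
    apply intervalIntegral.continuous_parametric_intervalIntegral_of_continuous
      (f := fun (t : ℝ) (s : ℝ) => g (max (t - s) 0) * (η (max s 0) + max x₀ 0)) _ continuous_id
    exact (hG'.comp (continuous_fst.sub continuous_snd)).mul
      ((hη'.comp continuous_snd).add continuous_const)
  -- the key integral splitting identity
  have hsplit : ∀ (κ x : ℝ → ℝ), ContinuousOn x (Ici 0) →
      (∀ s, 0 ≤ s → κ s = η s - max (x s) 0 + max x₀ 0) → ∀ t, 0 ≤ t →
      (∫ s in (0:ℝ)..t, g (t - s) * κ s)
        = (∫ s in (0:ℝ)..t, g (max (t - s) 0) * (η (max s 0) + max x₀ 0))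
          - ∫ s in (0:ℝ)..t, g (max (t - s) 0) * max (x s) 0 := by
    intro κ x hxc hκ t ht
    have hi1 : IntervalIntegrable
        (fun s => g (max (t - s) 0) * (η (max s 0) + max x₀ 0)) volume 0 t := by
      apply Continuous.intervalIntegrable
      exact (hG'.comp (continuous_const.sub continuous_id)).mul (hη'.add continuous_const)
    have hi2 : IntervalIntegrable (fun s => g (max (t - s) 0) * max (x s) 0) volume 0 t := by
      apply ContinuousOn.intervalIntegrable
      rw [uIcc_of_le ht]
      exact ((hG'.comp (continuous_const.sub continuous_id)).continuousOn).mul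
        ((continuous_id.max continuous_const).comp_continuousOn (hxc.mono Icc_subset_Ici_self))
    rw [← intervalIntegral.integral_sub hi1 hi2]
    apply intervalIntegral.integral_congr
    intro s hs
    rw [uIcc_of_le ht] at hs
    obtain ⟨hs0, hst⟩ := hs
    show g (t - s) * κ s = g (max (t - s) 0) * (η (max s 0) + max x₀ 0)
      - g (max (t - s) 0) * max (x s) 0
    rw [hκ s hs0, max_eq_left (by linarith : (0:ℝ) ≤ t - s), max_eq_left hs0]
    ring
  -- every CMS solution solves the Volterra equation
  have hvol : ∀ κ x : ℝ → ℝ, CMSsol g η ζ x₀ κ x → ∀ t, 0 ≤ t →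
      x t = Rfun g η ζ x₀ t + ∫ s in (0:ℝ)..t, g (max (t - s) 0) * max (x s) 0 := by
    rintro κ x ⟨hκc, hxc, hκ0, he1, he2⟩ t ht
    have h1 := he1 t ht
    rw [hsplit κ x hxc he2 t ht, he2 t ht] at h1
    have hmin : min (x t) 0 = x t - max (x t) 0 := by
      have := min_add_max (x t) 0
      linarith
    rw [hmin] at h1
    simp only [Rfun, max_eq_left ht]
    linarith
  constructor
  · -- existence
    obtain ⟨x, hxc, hxe⟩ := volterra_exists_global (G := fun u => g (max u 0)) hG' hR
    have hxe' : ∀ t, 0 ≤ t →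
        x t = Rfun g η ζ x₀ t + ∫ s in (0:ℝ)..t, g (max (t - s) 0) * max (x s) 0 := hxe
    have hx0 : x 0 = x₀ := by
      have h0 := hxe' 0 le_rfl
      rw [intervalIntegral.integral_same] at h0
      simp only [Rfun, intervalIntegral.integral_same, max_self] at h0
      rw [hζ0, hη0] at h0
      have := min_add_max x₀ 0
      linarith
    refine ⟨fun t => η t - max (x t) 0 + max x₀ 0, x, ?_, hxc, ?_, ?_, fun t ht => rfl⟩
    · exact (hη.sub ((continuous_id.max continuous_const).comp_continuousOn hxc)).add
        continuousOn_const
    · simp [hx0, hη0]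
    · intro t ht
      rw [hsplit _ x hxc (fun s _ => rfl) t ht]
      have hmin : min (x t) 0 = x t - max (x t) 0 := by
        have := min_add_max (x t) 0
        linarith
      have hxe'' := hxe' t ht
      simp only [Rfun, max_eq_left ht] at hxe''
      beta_reduce
      linarith [hmin, hxe'']
  · -- uniqueness
    intro κ₁ x₁ κ₂ x₂ h1 h2 t ht
    have hx12 : ∀ s ∈ Icc (0:ℝ) t, x₁ s = x₂ s := by
      apply volterra_unique (R := Rfun g η ζ x₀) hG'
        (h1.2.1.mono Icc_subset_Ici_self) (h2.2.1.mono Icc_subset_Ici_self)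
      · exact fun s hs => hvol _ _ h1 s hs.1
      · exact fun s hs => hvol _ _ h2 s hs.1
    have hxeq : x₁ t = x₂ t := hx12 t ⟨ht, le_rfl⟩
    refine ⟨?_, hxeq⟩
    rw [h1.2.2.2.2 t ht, h2.2.2.2.2 t ht, hxeq]
end

section
/- The solution map Λ of the CMS equations is non-anticipative: if (κᵢ, xᵢ) = Λ(ηᵢ, x₀, ζᵢ) for i=1,2 and (η₁,ζ₁) = (η₂,ζ₂) on [0,T], then (κ₁,x₁) = (κ₂,x₂) on [0,T]. -/
/-! If `Δx = x₁ - x₂`, then `Δx(t) = ∫₀ᵗ g(t - s) (x₁⁺(s) - x₂⁺(s)) ds`, and since `y ↦ y⁺` is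
1-Lipschitz, `|Δx(t)| ≤ M ∫₀ᵗ |Δx(s)| ds` on `[0, T]` with `M` a bound for `|g|` on `[0, T]`.
Grönwall's inequality then forces `Δx = 0` on `[0, T]`, and `κ₁ = κ₂` follows from the second
CMS equation. -/

open MeasureTheory Set Filter Topology

theorem eq_zero_of_abs_le_mul_integral_abs {f : ℝ → ℝ} {a b M : ℝ}
    (hf : ContinuousOn f (Icc a b))
    (hle : ∀ t ∈ Icc a b, |f t| ≤ M * ∫ s in a..t, |f s|) :
    ∀ t ∈ Icc a b, f t = 0 := by
  set F : ℝ → ℝ := fun t => ∫ s in a..t, |f s|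
  have hF_deriv : ∀ t ∈ Icc a b, HasDerivWithinAt F |f t| (Icc a b) t := fun t ht =>
    -- makes the `FTCFilter` instance for `𝓝[Icc a b] t` available
    have : Fact (t ∈ Icc a b) := ⟨ht⟩
    intervalIntegral.integral_hasDerivWithinAt_right
      ((hf.abs.mono (Icc_subset_Icc_right ht.2)).intervalIntegrable_of_Icc ht.1)
      (hf.abs.stronglyMeasurableAtFilter_nhdsWithin measurableSet_Icc t)
      (hf.abs t ht)
  have hF_nonneg : ∀ t ∈ Icc a b, 0 ≤ F t := fun t ht =>
    intervalIntegral.integral_nonneg ht.1 fun s _ => abs_nonneg (f s)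
  have hF_zero : ∀ t ∈ Icc a b, F t = 0 :=
    eq_zero_of_abs_deriv_le_mul_abs_self_of_eq_zero_right
      (fun t ht => (hF_deriv t ht).continuousWithinAt)
      (fun t ht => (hF_deriv t (Ico_subset_Icc_self ht)).mono_of_mem_nhdsWithin
        (Icc_mem_nhdsGE_of_mem ⟨ht.1, ht.2⟩))
      intervalIntegral.integral_same
      (fun t ht => by
        rw [Real.norm_eq_abs, abs_abs, Real.norm_eq_abs,
          abs_of_nonneg (hF_nonneg t (Ico_subset_Icc_self ht))]
        exact hle t (Ico_subset_Icc_self ht))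
  intro t ht
  refine abs_nonpos_iff.mp ?_
  calc |f t| ≤ M * F t := hle t ht
    _ = 0 := by rw [hF_zero t ht, mul_zero]

theorem intervalIntegrable_comp_sub_mul {g κ : ℝ → ℝ} {t : ℝ} (ht : 0 ≤ t)
    (hg : ContinuousOn g (Ici 0)) (hκ : ContinuousOn κ (Ici 0)) :
    IntervalIntegrable (fun s => g (t - s) * κ s) volume 0 t := by
  refine ContinuousOn.intervalIntegrable_of_Icc ht
    ((hg.comp (continuousOn_const.sub continuousOn_id) ?_).mul (hκ.mono Icc_subset_Ici_self))
  exact fun s hs => sub_nonneg.mpr hs.2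

namespace CMSsol

variable {g η ζ κ x : ℝ → ℝ} {x₀ : ℝ}

theorem eq_sub_integral (h : CMSsol g η ζ x₀ κ x) {t : ℝ} (ht : 0 ≤ t) :
    x t = ζ t + η t + max x₀ 0 - ∫ s in (0:ℝ)..t, g (t - s) * κ s := by
  obtain ⟨-, -, -, hmin, hκ⟩ := h
  linarith [min_add_max (x t) 0, hmin t ht, hκ t ht]

theorem abs_sub_le_mul_integral {η₁ η₂ ζ₁ ζ₂ κ₁ x₁ κ₂ x₂ : ℝ → ℝ} {T M : ℝ}
    (hg : ContinuousOn g (Ici 0)) (hM : ∀ s ∈ Icc (0:ℝ) T, |g s| ≤ M)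
    (h₁ : CMSsol g η₁ ζ₁ x₀ κ₁ x₁) (h₂ : CMSsol g η₂ ζ₂ x₀ κ₂ x₂)
    (hη : ∀ t ∈ Icc (0:ℝ) T, η₁ t = η₂ t) (hζ : ∀ t ∈ Icc (0:ℝ) T, ζ₁ t = ζ₂ t) :
    ∀ t ∈ Icc (0:ℝ) T, |x₁ t - x₂ t| ≤ M * ∫ s in (0:ℝ)..t, |x₁ s - x₂ s| := by
  intro t ht
  have hx_sub : x₁ t - x₂ t = ∫ s in (0:ℝ)..t, g (t - s) * (κ₂ s - κ₁ s) := by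
    simp only [mul_sub]
    rw [intervalIntegral.integral_sub (intervalIntegrable_comp_sub_mul ht.1 hg h₂.1)
      (intervalIntegrable_comp_sub_mul ht.1 hg h₁.1), h₁.eq_sub_integral ht.1,
      h₂.eq_sub_integral ht.1, hη t ht, hζ t ht]
    ring
  obtain ⟨-, hx₁, -, -, hκx₁⟩ := h₁
  obtain ⟨-, hx₂, -, -, hκx₂⟩ := h₂
  have hκ_sub : ∀ s ∈ Icc (0:ℝ) t, κ₂ s - κ₁ s = max (x₁ s) 0 - max (x₂ s) 0 := fun s hs => by
    rw [hκx₁ s hs.1, hκx₂ s hs.1, hη s ⟨hs.1, hs.2.trans ht.2⟩]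
    ring
  rw [hx_sub, ← Real.norm_eq_abs]
  calc ‖∫ s in (0:ℝ)..t, g (t - s) * (κ₂ s - κ₁ s)‖
      ≤ ∫ s in (0:ℝ)..t, M * |x₁ s - x₂ s| := by
        refine intervalIntegral.norm_integral_le_of_norm_le ht.1 (ae_of_all _ fun s hs => ?_)
          (ContinuousOn.intervalIntegrable_of_Icc ht.1
            (continuousOn_const.mul ((hx₁.sub hx₂).abs.mono Icc_subset_Ici_self)))
        have hts : t - s ∈ Icc (0:ℝ) T := ⟨by linarith [hs.2], by linarith [hs.1, ht.2]⟩
        rw [hκ_sub s (Ioc_subset_Icc_self hs), norm_mul, Real.norm_eq_abs, Real.norm_eq_abs]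
        exact mul_le_mul (hM _ hts) (abs_max_sub_max_le_abs _ _ _) (abs_nonneg _)
          ((abs_nonneg _).trans (hM _ hts))
    _ = M * ∫ s in (0:ℝ)..t, |x₁ s - x₂ s| := intervalIntegral.integral_const_mul _ _

end CMSsol

theorem cms_nonanticipative_general (g : ℝ → ℝ)
    (hg_cont : ContinuousOn g (Ici 0))
    (η₁ η₂ ζ₁ ζ₂ : ℝ → ℝ) (x₀ : ℝ)
    (κ₁ x₁ κ₂ x₂ : ℝ → ℝ)
    (h₁ : CMSsol g η₁ ζ₁ x₀ κ₁ x₁) (h₂ : CMSsol g η₂ ζ₂ x₀ κ₂ x₂)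
    (T : ℝ)
    (hη : ∀ t ∈ Icc (0:ℝ) T, η₁ t = η₂ t) (hζ : ∀ t ∈ Icc (0:ℝ) T, ζ₁ t = ζ₂ t) :
    ∀ t ∈ Icc (0:ℝ) T, κ₁ t = κ₂ t ∧ x₁ t = x₂ t := by
  obtain ⟨M, hM⟩ := isCompact_Icc.exists_bound_of_continuousOn (hg_cont.mono Icc_subset_Ici_self)
  have hle := CMSsol.abs_sub_le_mul_integral hg_cont hM h₁ h₂ hη hζ
  obtain ⟨-, hx₁, -, -, hκx₁⟩ := h₁
  obtain ⟨-, hx₂, -, -, hκx₂⟩ := h₂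
  have hx : ∀ t ∈ Icc (0:ℝ) T, x₁ t - x₂ t = 0 :=
    eq_zero_of_abs_le_mul_integral_abs ((hx₁.sub hx₂).mono Icc_subset_Ici_self) hle
  intro t ht
  have hxt : x₁ t = x₂ t := sub_eq_zero.mp (hx t ht)
  refine ⟨?_, hxt⟩
  rw [hκx₁ t ht.1, hκx₂ t ht.1, hη t ht, hxt]

/-- The CMS solution map is non-anticipative: if `(κᵢ,xᵢ)` solves the CMS equations
associated with `(ηᵢ, x₀, ζᵢ)` for `i = 1,2`, and `(η₁,ζ₁) = (η₂,ζ₂)` on `[0,T]`, then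
`(κ₁,x₁) = (κ₂,x₂)` on `[0,T]`. -/
theorem cms_nonanticipative (g : ℝ → ℝ)
    (hg_cont : ContinuousOn g (Ici 0)) (hg_nonneg : ∀ x ∈ Ici (0:ℝ), 0 ≤ g x)
    (hg_prob : ∫ x in Ioi (0:ℝ), g x = 1)
    (η₁ η₂ ζ₁ ζ₂ : ℝ → ℝ) (x₀ : ℝ)
    (hη₁ : ContinuousOn η₁ (Ici 0)) (hη₁0 : η₁ 0 = 0)
    (hη₂ : ContinuousOn η₂ (Ici 0)) (hη₂0 : η₂ 0 = 0)
    (hζ₁ : ContinuousOn ζ₁ (Ici 0)) (hζ₁0 : ζ₁ 0 = min x₀ 0)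
    (hζ₂ : ContinuousOn ζ₂ (Ici 0)) (hζ₂0 : ζ₂ 0 = min x₀ 0)
    (κ₁ x₁ κ₂ x₂ : ℝ → ℝ)
    (h₁ : CMSsol g η₁ ζ₁ x₀ κ₁ x₁) (h₂ : CMSsol g η₂ ζ₂ x₀ κ₂ x₂)
    (T : ℝ) (hT : 0 ≤ T)
    (hη : ∀ t ∈ Icc (0:ℝ) T, η₁ t = η₂ t) (hζ : ∀ t ∈ Icc (0:ℝ) T, ζ₁ t = ζ₂ t) :
    ∀ t ∈ Icc (0:ℝ) T, κ₁ t = κ₂ t ∧ x₁ t = x₂ t :=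
  cms_nonanticipative_general g hg_cont η₁ η₂ ζ₁ ζ₂ x₀ κ₁ x₁ κ₂ x₂ h₁ h₂ T hη hζ
end

section
/- For fixed κ ∈ C[0,∞), the mapping t ↦ Γ_t κ from [0,∞) to H¹(0,∞) is continuous, where (Γ_t κ)(r) = Ḡ(r)κ(t) − ∫₀ᵗ κ(s)g(t+r−s)ds. -/
/-!
The memory term `∫₀ᵗ κ(s) f(t + r - s) ds` (with `f = g` or `f = g'`) is jointly continuous
in `(t, r)`, and for `0 ≤ t ≤ T` it is dominated by `sup_{[0,T]} |κ| · ∫_r^{r+T} |f|`.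
By Cauchy–Schwarz and Tonelli this majorant lies in `L²(0, ∞)` whenever `f` does, so
dominated convergence in `L²` makes `t ↦ Γ_t κ` and `t ↦ (Γ_t κ)′` continuous; the terms
`Ḡ κ(t)` and `-g κ(t)` are harmless since `Ḡ, g ∈ L²` and `κ` is continuous.
-/

open MeasureTheory Set Filter Topology ENNReal

theorem tendsto_eLpNorm_of_dominated_convergence {α ι E : Type*} [MeasurableSpace α]
    [NormedAddCommGroup E] {μ : Measure α} {l : Filter ι} [l.IsCountablyGenerated]
    {p : ℝ≥0∞} (hp : p ≠ ∞) {F : ι → α → E} (bound : α → ℝ)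
    (hF_meas : ∀ᶠ i in l, AEStronglyMeasurable (F i) μ)
    (h_bound : ∀ᶠ i in l, ∀ᵐ a ∂μ, ‖F i a‖ ≤ bound a) (h_bound_memLp : MemLp bound p μ)
    (h_lim : ∀ᵐ a ∂μ, Tendsto (fun i => F i a) l (𝓝 0)) :
    Tendsto (fun i => eLpNorm (F i) p μ) l (𝓝 0) := by
  rcases eq_or_ne p 0 with rfl | hp0
  · simpa only [eLpNorm_exponent_zero] using tendsto_const_nhds
  have hp_pos : 0 < p.toReal := toReal_pos hp0 hp
  have h_lintegral : Tendsto (fun i => ∫⁻ a, ‖F i a‖ₑ ^ p.toReal ∂μ) l (𝓝 0) := by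
    simpa using tendsto_lintegral_filter_of_dominated_convergence' (f := fun _ => 0)
      (fun a => ‖bound a‖ₑ ^ p.toReal)
      (hF_meas.mono fun i hi => hi.enorm.pow_const _)
      (h_bound.mono fun i hi => hi.mono fun a ha =>
        rpow_le_rpow (enorm_le_iff_norm_le.2 (ha.trans (Real.le_norm_self _))) hp_pos.le)
      (lintegral_rpow_enorm_lt_top_of_eLpNorm_lt_top hp0 hp h_bound_memLp.eLpNorm_lt_top).ne
      (h_lim.mono fun a ha => by simpa [hp_pos] using ha.enorm.ennrpow_const p.toReal)
  simpa [eLpNorm_eq_lintegral_rpow_enorm_toReal hp0 hp, hp_pos] using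
    h_lintegral.ennrpow_const (1 / p.toReal)

theorem enorm_integral_sq_le {α : Type*} [MeasurableSpace α] (ν : Measure α) (g : α → ℝ) :
    ‖∫ x, g x ∂ν‖ₑ ^ 2 ≤ ν univ * ∫⁻ x, ‖g x‖ₑ ^ 2 ∂ν := by
  by_cases hg : Integrable g ν
  swap
  · simp [integral_undef hg]
  have h_sqrt : ∀ a : ℝ≥0∞, (a ^ (2⁻¹ : ℝ)) ^ 2 = a := fun a => by
    rw [← rpow_natCast, ← rpow_mul]; norm_num
  have h_cs := ENNReal.lintegral_mul_le_Lp_mul_Lq ν Real.HolderConjugate.two_two hg.1.enorm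
    (aemeasurable_const (b := (1 : ℝ≥0∞)))
  simp only [Pi.mul_apply, mul_one, one_rpow, lintegral_const, one_div, one_mul] at h_cs
  calc ‖∫ x, g x ∂ν‖ₑ ^ 2 ≤ (∫⁻ x, ‖g x‖ₑ ∂ν) ^ 2 := by
        gcongr; exact enorm_integral_le_lintegral_enorm g
    _ ≤ ((∫⁻ x, ‖g x‖ₑ ^ (2 : ℝ) ∂ν) ^ (2⁻¹ : ℝ) * ν univ ^ (2⁻¹ : ℝ)) ^ 2 := by gcongr
    _ = ν univ * ∫⁻ x, ‖g x‖ₑ ^ 2 ∂ν := by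
        rw [mul_pow, h_sqrt, h_sqrt, mul_comm]
        congr 2 with x
        exact rpow_two _

theorem setLIntegral_Ioi_comp_add_le {F : ℝ → ℝ≥0∞} (hF : Measurable F) (a : ℝ) {u : ℝ}
    (hu : 0 ≤ u) : ∫⁻ r in Ioi a, F (r + u) ≤ ∫⁻ x in Ioi a, F x :=
  calc ∫⁻ r in Ioi a, F (r + u) ≤ ∫⁻ r in Ioi (a - u), F (r + u) :=
        lintegral_mono_set (Ioi_subset_Ioi (by linarith))
    _ = ∫⁻ x in Ioi a, F x := by
        rw [← preimage_add_const_Ioi]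
        exact (measurePreserving_add_right volume u).setLIntegral_comp_preimage
          measurableSet_Ioi hF

theorem memLp_two_intervalIntegral_abs {f : ℝ → ℝ} (hf : Continuous f) {a : ℝ}
    (hfL2 : MemLp f 2 (volume.restrict (Ioi a))) {T : ℝ} (hT : 0 ≤ T) :
    MemLp (fun r => ∫ u in r..r + T, |f u|) 2 (volume.restrict (Ioi a)) := by
  have h_shift : ∀ r, ∫ u in r..r + T, |f u| = ∫ u in Ioc 0 T, |f (r + u)| := fun r => by
    rw [← intervalIntegral.integral_of_le hT,
      intervalIntegral.integral_comp_add_left (fun u => |f u|) r]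
    simp [add_comm]
  have h_cont : Continuous fun r => ∫ u in r..r + T, |f u| := by
    simp only [h_shift, ← intervalIntegral.integral_of_le hT]
    exact intervalIntegral.continuous_parametric_intervalIntegral_of_continuous'
      (by fun_prop) 0 T
  have h_sq_le : ∀ r, ‖∫ u in r..r + T, |f u|‖ₑ ^ 2 ≤
      ENNReal.ofReal T * ∫⁻ u in Ioc 0 T, ‖f (r + u)‖ₑ ^ 2 := fun r => by
    simpa [h_shift, Real.volume_Ioc] using
      enorm_integral_sq_le (volume.restrict (Ioc 0 T)) fun u => |f (r + u)|
  have h_meas : Measurable fun x => ‖f x‖ₑ ^ 2 := hf.measurable.enorm.pow_const 2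
  have h_meas_prod : Measurable fun p : ℝ × ℝ => ‖f (p.1 + p.2)‖ₑ ^ 2 :=
    h_meas.comp measurable_add
  have hf_fin : ∫⁻ x in Ioi a, ‖f x‖ₑ ^ 2 < ∞ := by
    simpa [HasFiniteIntegral, enorm_pow] using hfL2.integrable_sq.hasFiniteIntegral
  refine (memLp_two_iff_integrable_sq h_cont.aestronglyMeasurable).2
    ⟨(h_cont.pow 2).aestronglyMeasurable, ?_⟩
  simp only [HasFiniteIntegral, enorm_pow]
  calc ∫⁻ r in Ioi a, ‖∫ u in r..r + T, |f u|‖ₑ ^ 2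
      ≤ ∫⁻ r in Ioi a, ENNReal.ofReal T * ∫⁻ u in Ioc 0 T, ‖f (r + u)‖ₑ ^ 2 :=
        lintegral_mono h_sq_le
    _ = ENNReal.ofReal T * ∫⁻ u in Ioc 0 T, ∫⁻ r in Ioi a, ‖f (r + u)‖ₑ ^ 2 := by
        rw [lintegral_const_mul _ h_meas_prod.lintegral_prod_right',
          lintegral_lintegral_swap (by fun_prop)]
    _ ≤ ENNReal.ofReal T * ∫⁻ u in Ioc 0 T, ∫⁻ x in Ioi a, ‖f x‖ₑ ^ 2 := by
        gcongr _ * ?_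
        exact setLIntegral_mono measurable_const fun u hu =>
          setLIntegral_Ioi_comp_add_le h_meas a hu.1.le
    _ < ∞ := by
        rw [setLIntegral_const, Real.volume_Ioc]
        exact mul_lt_top ofReal_lt_top (mul_lt_top hf_fin ofReal_lt_top)

theorem abs_intervalIntegral_mul_comp_sub_le {κ f : ℝ → ℝ} (hκ : Continuous κ)
    (hf : Continuous f) {C t T : ℝ} (hC : ∀ s ∈ Icc 0 T, |κ s| ≤ C) (ht : t ∈ Icc 0 T)
    (r : ℝ) : |∫ s in (0:ℝ)..t, κ s * f (t + r - s)| ≤ C * ∫ u in r..r + T, |f u| :=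
  calc |∫ s in (0:ℝ)..t, κ s * f (t + r - s)|
      ≤ ∫ s in (0:ℝ)..t, |κ s * f (t + r - s)| :=
        intervalIntegral.abs_integral_le_integral_abs ht.1
    _ ≤ ∫ s in (0:ℝ)..t, C * |f (t + r - s)| := by
        refine intervalIntegral.integral_mono_on ht.1
          (Continuous.intervalIntegrable (by fun_prop) _ _)
          (Continuous.intervalIntegrable (by fun_prop) _ _) fun s hs => ?_
        rw [abs_mul]
        exact mul_le_mul_of_nonneg_right (hC s ⟨hs.1, hs.2.trans ht.2⟩) (abs_nonneg _)
    _ = C * ∫ u in r..t + r, |f u| := by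
        rw [intervalIntegral.integral_const_mul,
          intervalIntegral.integral_comp_sub_left (fun u => |f u|)]
        simp
    _ ≤ C * ∫ u in r..r + T, |f u| := by
        have hC0 : 0 ≤ C := (abs_nonneg _).trans (hC 0 ⟨le_rfl, ht.1.trans ht.2⟩)
        gcongr
        exact intervalIntegral.integral_mono_interval le_rfl (by linarith [ht.1])
          (by linarith [ht.2]) (ae_of_all _ fun u => abs_nonneg _)
          (Continuous.intervalIntegrable (by fun_prop) _ _)

theorem tendsto_eLpNorm_intervalIntegral_mul_comp_sub {κ f : ℝ → ℝ} (hκ : Continuous κ)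
    (hf : Continuous f) {a : ℝ} (hfL2 : MemLp f 2 (volume.restrict (Ioi a))) {t₀ : ℝ}
    (ht₀ : 0 ≤ t₀) :
    Tendsto (fun t => eLpNorm (fun r => (∫ s in (0:ℝ)..t, κ s * f (t + r - s)) -
        ∫ s in (0:ℝ)..t₀, κ s * f (t₀ + r - s)) 2 (volume.restrict (Ioi a)))
      (𝓝[Ici 0] t₀) (𝓝 0) := by
  set A : ℝ → ℝ → ℝ := fun t r => ∫ s in (0:ℝ)..t, κ s * f (t + r - s)
  have hA : Continuous fun p : ℝ × ℝ => A p.1 p.2 :=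
    intervalIntegral.continuous_parametric_intervalIntegral_of_continuous (by fun_prop)
      continuous_fst
  set T := t₀ + 1
  obtain ⟨C, hC⟩ := (isCompact_Icc (a := 0) (b := T)).exists_bound_of_continuousOn
    hκ.continuousOn
  set Φ : ℝ → ℝ := fun r => ∫ u in r..r + T, |f u|
  have h_near : ∀ᶠ t in 𝓝[Ici 0] t₀, t ∈ Icc 0 T :=
    mem_of_superset (inter_mem_nhdsWithin (Ici 0) (Iio_mem_nhds (lt_add_one t₀)))
      fun t ht => ⟨ht.1, ht.2.le⟩
  have hA_slice : ∀ t, Continuous (A t) := fun t =>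
    hA.comp (continuous_const.prodMk continuous_id)
  refine tendsto_eLpNorm_of_dominated_convergence (F := fun t r => A t r - A t₀ r)
    ofNat_ne_top (fun r => 2 * (C * Φ r))
    (Eventually.of_forall fun t => ((hA_slice t).sub (hA_slice t₀)).aestronglyMeasurable) ?_
    ((memLp_two_intervalIntegral_abs hf hfL2 (by linarith)).const_mul C |>.const_mul 2) ?_
  · filter_upwards [h_near] with t ht
    refine ae_of_all _ fun r => ?_
    calc ‖A t r - A t₀ r‖ ≤ |A t r| + |A t₀ r| := abs_sub _ _
      _ ≤ C * Φ r + C * Φ r := add_le_add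
          (abs_intervalIntegral_mul_comp_sub_le hκ hf hC ht r)
          (abs_intervalIntegral_mul_comp_sub_le hκ hf hC ⟨ht₀, by linarith⟩ r)
      _ = 2 * (C * Φ r) := by ring
  · refine ae_of_all _ fun r => ?_
    have h : Tendsto (fun t => A t r) (𝓝[Ici 0] t₀) (𝓝 (A t₀ r)) :=
      ((hA.comp (continuous_id.prodMk continuous_const)).tendsto t₀).mono_left
        nhdsWithin_le_nhds
    simpa using h.sub_const (A t₀ r)

theorem tendsto_eLpNorm_mul_sub_intervalIntegral_sub {w f κ : ℝ → ℝ}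
    (hf : ContinuousOn f (Ici 0)) (hfL2 : MemLp f 2 (volume.restrict (Ioi 0)))
    (hw : MemLp w 2 (volume.restrict (Ioi 0))) (hκ : ContinuousOn κ (Ici 0)) {t₀ : ℝ}
    (ht₀ : 0 ≤ t₀) :
    Tendsto (fun t =>
      eLpNorm (fun r => (w r * κ t - ∫ s in (0:ℝ)..t, κ s * f (t + r - s)) -
          (w r * κ t₀ - ∫ s in (0:ℝ)..t₀, κ s * f (t₀ + r - s))) 2 (volume.restrict (Ioi 0)))
      (𝓝[Ici 0] t₀) (𝓝 0) := by
  set fc : ℝ → ℝ := fun x => f (max x 0)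
  set κc : ℝ → ℝ := fun x => κ (max x 0)
  have hfc : Continuous fc := hf.comp_continuous (by fun_prop) fun x => le_max_right x 0
  have hκc : Continuous κc := hκ.comp_continuous (by fun_prop) fun x => le_max_right x 0
  have hfcL2 : MemLp fc 2 (volume.restrict (Ioi 0)) := hfL2.ae_eq <|
    ae_restrict_of_forall_mem measurableSet_Ioi fun x hx => by
      simp [fc, max_eq_left (mem_Ioi.1 hx).le]
  have h_ext : ∀ t r, 0 ≤ t → 0 ≤ r → ∫ s in (0:ℝ)..t, κ s * f (t + r - s) =
      ∫ s in (0:ℝ)..t, κc s * fc (t + r - s) := fun t r ht hr =>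
    intervalIntegral.integral_congr fun s hs => by
      rw [uIcc_of_le ht] at hs
      simp only [fc, κc, max_eq_left hs.1, max_eq_left (by linarith [hs.2] : 0 ≤ t + r - s)]
  have h_source : Tendsto (fun t => eLpNorm ((κ t - κ t₀) • w) 2 (volume.restrict (Ioi 0)))
      (𝓝[Ici 0] t₀) (𝓝 0) := by
    simp only [eLpNorm_const_smul]
    simpa using ENNReal.Tendsto.mul_const
      ((hκ.continuousWithinAt ht₀).sub_const (κ t₀)).enorm (Or.inr hw.eLpNorm_ne_top)
  have h_memory := tendsto_eLpNorm_intervalIntegral_mul_comp_sub hκc hfc hfcL2 ht₀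
  refine tendsto_of_tendsto_of_tendsto_of_le_of_le' tendsto_const_nhds
    (by simpa using h_source.add h_memory) (Eventually.of_forall fun _ => zero_le) ?_
  filter_upwards [self_mem_nhdsWithin] with t (ht : 0 ≤ t)
  have h_cont : ∀ t', Continuous fun r => ∫ s in (0:ℝ)..t', κc s * fc (t' + r - s) :=
    fun t' => intervalIntegral.continuous_parametric_intervalIntegral_of_continuous'
      (by fun_prop) 0 t'
  refine (eLpNorm_congr_ae ?_).trans_le
    (eLpNorm_sub_le (hw.1.const_smul _) ((h_cont t).sub (h_cont t₀)).aestronglyMeasurable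
      one_le_two)
  refine ae_restrict_of_forall_mem measurableSet_Ioi fun r (hr : 0 < r) => ?_
  simp only [h_ext t r ht hr.le, h_ext t₀ r ht₀ hr.le, Pi.sub_apply, Pi.smul_apply,
    smul_eq_mul]
  ring

theorem Gamma_t_time_continuous_general (G g g' κ : ℝ → ℝ)
    (hg_cont : ContinuousOn g (Ici 0))
    (hg'_cont : ContinuousOn g' (Ici 0))
    (hgL2 : MemLp g 2 (volume.restrict (Ioi 0)))
    (hg'L2 : MemLp g' 2 (volume.restrict (Ioi 0)))
    (hGbarL2 : MemLp (fun x => 1 - G x) 2 (volume.restrict (Ioi 0)))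
    (hκ : ContinuousOn κ (Ici 0)) :
    ∀ t₀ ∈ Ici (0:ℝ),
      Tendsto (fun t =>
        (eLpNorm (fun r => ((1 - G r) * κ t - ∫ s in (0:ℝ)..t, κ s * g (t + r - s)) -
              ((1 - G r) * κ t₀ - ∫ s in (0:ℝ)..t₀, κ s * g (t₀ + r - s))) 2
            (volume.restrict (Ioi 0))) ^ 2 +
          (eLpNorm (fun r => (-(g r * κ t) - ∫ s in (0:ℝ)..t, κ s * g' (t + r - s)) -
              (-(g r * κ t₀) - ∫ s in (0:ℝ)..t₀, κ s * g' (t₀ + r - s))) 2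
            (volume.restrict (Ioi 0))) ^ 2)
        (𝓝[Ici 0] t₀) (𝓝 0) := by
  intro t₀ ht₀
  have hΓ := tendsto_eLpNorm_mul_sub_intervalIntegral_sub hg_cont hgL2 hGbarL2 hκ ht₀
  have hΓ' := tendsto_eLpNorm_mul_sub_intervalIntegral_sub hg'_cont hg'L2 hgL2.neg hκ ht₀
  simp only [Pi.neg_apply, neg_mul] at hΓ'
  simpa using (ENNReal.Tendsto.pow (n := 2) hΓ).add (ENNReal.Tendsto.pow (n := 2) hΓ')

/-- Continuity of `t ↦ Γ_t κ` from `[0,∞)` into `H¹(0,∞)` for fixed continuous `κ`, where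
`(Γ_t κ)(r) = Ḡ(r)κ(t) − ∫₀ᵗ κ(s)g(t+r−s)ds` with derivative
`(Γ_t κ)′(r) = −g(r)κ(t) − ∫₀ᵗ κ(s)g′(t+r−s)ds`: the squared `H¹` distance between
`Γ_t κ` and `Γ_{t₀} κ` tends to `0` as `t → t₀` within `[0,∞)`. -/
theorem Gamma_t_time_continuous (G g g' κ : ℝ → ℝ) (H H2 : ℝ)
    (hG : ∀ x, 0 ≤ x → HasDerivAt G (g x) x)
    (hg_cont : ContinuousOn g (Ici 0))
    (hg' : ∀ x, 0 ≤ x → HasDerivAt g (g' x) x)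
    (hg'_cont : ContinuousOn g' (Ici 0))
    (hgL2 : MemLp g 2 (volume.restrict (Ioi 0)))
    (hg'L2 : MemLp g' 2 (volume.restrict (Ioi 0)))
    (hH : ∀ x, 0 ≤ x → g x ≤ H * (1 - G x))
    (hH2 : ∀ x, 0 ≤ x → |g' x| ≤ H2 * (1 - G x))
    (hGbarL2 : MemLp (fun x => 1 - G x) 2 (volume.restrict (Ioi 0)))
    (hGtailL2 : MemLp (fun x => ∫ u in Ioi x, (1 - G u)) 2 (volume.restrict (Ioi 0)))
    (hκ : ContinuousOn κ (Ici 0)) :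
    ∀ t₀ ∈ Ici (0:ℝ),
      Tendsto (fun t =>
        (eLpNorm (fun r => ((1 - G r) * κ t - ∫ s in (0:ℝ)..t, κ s * g (t + r - s)) -
              ((1 - G r) * κ t₀ - ∫ s in (0:ℝ)..t₀, κ s * g (t₀ + r - s))) 2
            (volume.restrict (Ioi 0))) ^ 2 +
          (eLpNorm (fun r => (-(g r * κ t) - ∫ s in (0:ℝ)..t, κ s * g' (t + r - s)) -
              (-(g r * κ t₀) - ∫ s in (0:ℝ)..t₀, κ s * g' (t₀ + r - s))) 2
            (volume.restrict (Ioi 0))) ^ 2)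
        (𝓝[Ici 0] t₀) (𝓝 0) :=
  Gamma_t_time_continuous_general G g g' κ hg_cont hg'_cont hgL2 hg'L2 hGbarL2 hκ
end
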